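/- Let w*, λ ∈ appropriate spaces with support S = supp(w*), and suppose α > 0 satisfies α‖w*‖_∞ < min_{j∈S} |⟨X_S† x_j, w*_S⟩| - max_{ℓ∉S} |⟨X_S† x_ℓ, w*_S⟩|, where the right-hand side is assumed positive. Then for the vector u := X (X_Sᵀ)† w*_S - α w*, every coordinate i ∈ S satisfies |u_i| > |u_ℓ| for all ℓ ∉ S; in particular hard-thresholding u at level k = |S| uniquely selects the support S. -/

import Mathlib

/-!
Off the support `w ℓ = 0`, so `u ℓ = ⟨x_ℓ, p⟩`, while `|u i| ≥ |⟨x_i, p⟩| - α ‖w‖_∞`; the gap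
condition then gives `|u ℓ| < |u i|`.

For hard thresholding, a competitor `z` with support `T`, `#T ≤ #S`, costs at least
`‖u‖² - ∑_T u²`. Because every entry of `u` on `S` dominates every entry off `S`,
`∑_T u² ≤ ∑_S u²`, strictly unless `T ⊆ S`, and `‖u‖² - ∑_S u²` is the cost of keeping `u` on `S`.
For `z` supported in `S` the cost splits orthogonally into that minimal cost plus the squared
distance from `z` to `u` restricted to `S`, which forces uniqueness.
-/

open Matrix

noncomputable section

/-- The hard-thresholding set: minimizers of `‖z - u‖₂²` over `k`-sparse `z`. -/
def htSet {d : ℕ} (k : ℕ) (u : Fin d → ℝ) : Set (Fin d → ℝ) :=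
  {z | (Finset.univ.filter fun i => z i ≠ 0).card ≤ k ∧
    ∀ z' : Fin d → ℝ, (Finset.univ.filter fun i => z' i ≠ 0).card ≤ k →
      (∑ i, (z i - u i) ^ 2) ≤ ∑ i, (z' i - u i) ^ 2}

open Finset

section Separation

variable {ι : Type*} [DecidableEq ι] {f : ι → ℝ} {S T : Finset ι}

theorem sum_lt_sum_of_card_le_of_not_subset (hf : ∀ i ∈ S, 0 ≤ f i)
    (hsep : ∀ i ∈ S, ∀ j ∉ S, f j < f i) (hcard : #T ≤ #S) (hTS : ¬T ⊆ S) :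
    ∑ i ∈ T, f i < ∑ i ∈ S, f i := by
  have hout : (T \ S).Nonempty := sdiff_nonempty.mpr hTS
  have hcard' : #(T \ S) ≤ #(S \ T) := card_sdiff_le_card_sdiff_iff.mpr hcard
  have hin : (S \ T).Nonempty := card_pos.mp (hout.card_pos.trans_le hcard')
  obtain ⟨i₀, hi₀, hmin⟩ := (S \ T).exists_min_image f hin
  have hi₀S : i₀ ∈ S := (mem_sdiff.mp hi₀).1
  have key : ∑ i ∈ T \ S, f i < ∑ i ∈ S \ T, f i :=
    calc ∑ i ∈ T \ S, f i < ∑ _i ∈ T \ S, f i₀ :=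
          sum_lt_sum_of_nonempty hout fun j hj => hsep i₀ hi₀S j (mem_sdiff.mp hj).2
      _ = #(T \ S) • f i₀ := sum_const _
      _ ≤ #(S \ T) • f i₀ := nsmul_le_nsmul_left (hf i₀ hi₀S) hcard'
      _ ≤ ∑ i ∈ S \ T, f i := card_nsmul_le_sum _ _ _ hmin
  rw [← sum_inter_add_sum_sdiff T S, ← sum_inter_add_sum_sdiff S T, inter_comm]
  linarith

theorem sum_le_sum_of_card_le (hf : ∀ i ∈ S, 0 ≤ f i)
    (hsep : ∀ i ∈ S, ∀ j ∉ S, f j < f i) (hcard : #T ≤ #S) :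
    ∑ i ∈ T, f i ≤ ∑ i ∈ S, f i := by
  by_cases hTS : T ⊆ S
  · exact sum_le_sum_of_subset_of_nonneg hTS fun i hi _ => hf i hi
  · exact (sum_lt_sum_of_card_le_of_not_subset hf hsep hcard hTS).le

end Separation

section SquaredError

variable {ι : Type*} [Fintype ι] [DecidableEq ι] {S T : Finset ι} {u z : ι → ℝ}

theorem sum_sq_sub_sum_sq_le_sum_sq_sub (hz : ∀ i ∉ T, z i = 0) :
    ∑ i, u i ^ 2 - ∑ i ∈ T, u i ^ 2 ≤ ∑ i, (z i - u i) ^ 2 := by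
  rw [← sum_compl_add_sum T, add_sub_cancel_right, ← sum_compl_add_sum T]
  refine le_add_of_le_of_nonneg (le_of_eq (sum_congr rfl fun i hi => ?_))
    (sum_nonneg fun i _ => sq_nonneg _)
  rw [hz i (mem_compl.mp hi), zero_sub, neg_sq]

theorem sum_sq_sub_piecewise (u : ι → ℝ) (S : Finset ι) :
    ∑ i, (S.piecewise u 0 i - u i) ^ 2 = ∑ i, u i ^ 2 - ∑ i ∈ S, u i ^ 2 := by
  rw [eq_sub_iff_add_eq, ← sum_compl_add_sum S, ← sum_compl_add_sum S, add_assoc, ← sum_add_distrib]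
  congr 1
  · exact sum_congr rfl fun i hi => by
      rw [S.piecewise_eq_of_notMem _ _ (mem_compl.mp hi)]; simp
  · exact sum_congr rfl fun i hi => by rw [S.piecewise_eq_of_mem _ _ hi]; simp

/-- Pythagoras: `u - S.piecewise u 0` is orthogonal to every vector supported in `S`. -/
theorem sum_sq_sub_eq_add_of_support_subset (hz : ∀ i ∉ S, z i = 0) :
    ∑ i, (z i - u i) ^ 2 =
      ∑ i, (z i - S.piecewise u 0 i) ^ 2 + ∑ i, (S.piecewise u 0 i - u i) ^ 2 := by
  rw [← sum_add_distrib]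
  refine sum_congr rfl fun i _ => ?_
  by_cases hi : i ∈ S
  · simp [S.piecewise_eq_of_mem _ _ hi]
  · simp [S.piecewise_eq_of_notMem _ _ hi, hz i hi]

end SquaredError

theorem card_filter_ne_zero_le_of_support_subset {d : ℕ} {S : Finset (Fin d)} {z : Fin d → ℝ}
    (hz : ∀ i ∉ S, z i = 0) : #(univ.filter fun i => z i ≠ 0) ≤ #S :=
  card_le_card fun i hi => by
    by_contra hiS
    exact (mem_filter.mp hi).2 (hz i hiS)

theorem htSet_eq_singleton_piecewise {d : ℕ} {u : Fin d → ℝ} {S : Finset (Fin d)}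
    (hsep : ∀ i ∈ S, ∀ ℓ, ℓ ∉ S → |u ℓ| < |u i|) :
    htSet #S u = {S.piecewise u 0} := by
  have hsep_sq : ∀ i ∈ S, ∀ j ∉ S, u j ^ 2 < u i ^ 2 := fun i hi j hj =>
    sq_lt_sq.mpr (hsep i hi j hj)
  have hsq_nonneg : ∀ i ∈ S, 0 ≤ u i ^ 2 := fun i _ => sq_nonneg _
  have hv_supp : ∀ i ∉ S, S.piecewise u 0 i = 0 := fun i hi => S.piecewise_eq_of_notMem _ _ hi
  have hoff_support : ∀ (z : Fin d → ℝ), ∀ i ∉ univ.filter fun i => z i ≠ 0, z i = 0 :=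
    fun z i hi => by simpa using hi
  have hcost_le : ∀ z : Fin d → ℝ, #(univ.filter fun i => z i ≠ 0) ≤ #S →
      ∑ i, (S.piecewise u 0 i - u i) ^ 2 ≤ ∑ i, (z i - u i) ^ 2 := fun z hz => by
    rw [sum_sq_sub_piecewise]
    linarith [sum_sq_sub_sum_sq_le_sum_sq_sub (u := u) (hoff_support z),
      sum_le_sum_of_card_le hsq_nonneg hsep_sq hz]
  ext z
  refine ⟨fun ⟨hz, hzmin⟩ => ?_, fun hz => ?_⟩
  · have hzS : ∀ i ∉ S, z i = 0 := by
      by_contra! hzS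
      obtain ⟨j, hjS, hj⟩ := hzS
      have hnot : ¬(univ.filter fun i => z i ≠ 0) ⊆ S := fun h => hjS (h (by simpa using hj))
      have hz_le := hzmin _ (card_filter_ne_zero_le_of_support_subset hv_supp)
      rw [sum_sq_sub_piecewise] at hz_le
      linarith [sum_sq_sub_sum_sq_le_sum_sq_sub (u := u) (hoff_support z),
        sum_lt_sum_of_card_le_of_not_subset hsq_nonneg hsep_sq hz hnot]
    have hdist : ∑ i, (z i - S.piecewise u 0 i) ^ 2 ≤ 0 := by
      linarith [sum_sq_sub_eq_add_of_support_subset (u := u) hzS,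
        hzmin _ (card_filter_ne_zero_le_of_support_subset hv_supp)]
    have hzero := (sum_eq_zero_iff_of_nonneg fun i _ => sq_nonneg _).mp
      (le_antisymm hdist (sum_nonneg fun i _ => sq_nonneg _))
    funext i
    exact sub_eq_zero.mp (pow_eq_zero_iff two_ne_zero |>.mp (hzero i (mem_univ i)))
  · rw [Set.mem_singleton_iff.mp hz]
    exact ⟨card_filter_ne_zero_le_of_support_subset hv_supp, hcost_le⟩

theorem abs_lt_abs_sub_mul_of_mul_lt_abs_sub_abs {a b c B α : ℝ} (hα : 0 ≤ α) (hb : |b| ≤ B)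
    (h : α * B < |a| - |c|) : |c| < |a - α * b| :=
  calc |c| < |a| - α * B := by linarith
    _ ≤ |a| - |α * b| := by
      rw [abs_mul, abs_of_nonneg hα]
      linarith [mul_le_mul_of_nonneg_left hb hα]
    _ ≤ |a - α * b| := abs_sub_abs_le_abs_sub _ _

theorem support_separation_general {n d : ℕ}
    (X : Matrix (Fin n) (Fin d) ℝ) (S : Finset (Fin d))
    (w : Fin d → ℝ) (α : ℝ) (hα : 0 < α)
    (hsupp : ∀ ℓ, ℓ ∉ S → w ℓ = 0)
    (p : Fin n → ℝ)
    (hcond : ∀ j ∈ S, ∀ ℓ, ℓ ∉ S →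
      α * (⨆ i, |w i|) < |Xᵀ.mulVec p j| - |Xᵀ.mulVec p ℓ|) :
    (∀ i ∈ S, ∀ ℓ, ℓ ∉ S →
      |Xᵀ.mulVec p ℓ - α * w ℓ| < |Xᵀ.mulVec p i - α * w i|) ∧
    htSet S.card (fun i => Xᵀ.mulVec p i - α * w i) =
      {fun i => if i ∈ S then Xᵀ.mulVec p i - α * w i else 0} := by
  have hsep : ∀ i ∈ S, ∀ ℓ, ℓ ∉ S →
      |Xᵀ.mulVec p ℓ - α * w ℓ| < |Xᵀ.mulVec p i - α * w i| := by
    intro i hi ℓ hℓ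
    rw [hsupp ℓ hℓ, mul_zero, sub_zero]
    exact abs_lt_abs_sub_mul_of_mul_lt_abs_sub_abs hα.le
      (le_ciSup (Finite.bddAbove_range fun j => |w j|) i) (hcond i hi ℓ hℓ)
  exact ⟨hsep, htSet_eq_singleton_piecewise hsep⟩

/-- If `α ‖w*‖_∞ < min_{j∈S} |⟨x_j, (X_Sᵀ)† w*_S⟩| - max_{ℓ∉S} |⟨x_ℓ, (X_Sᵀ)† w*_S⟩|`
then, for `u := Xᵀ (X_Sᵀ)† w*_S - α w*`, every in-support coordinate dominates
every off-support coordinate in magnitude: `|u_i| > |u_ℓ|` for `i ∈ S`, `ℓ ∉ S`;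
in particular hard-thresholding `u` at level `k = |S|` uniquely selects `S`. -/
theorem support_separation {n d : ℕ}
    (X : Matrix (Fin n) (Fin d) ℝ) (S : Finset (Fin d))
    (w : Fin d → ℝ) (α : ℝ) (hα : 0 < α)
    (hsupp : ∀ ℓ, ℓ ∉ S → w ℓ = 0)
    (XS : Matrix (Fin n) S ℝ) (hXS : ∀ i (j : S), XS i j = X i (j : Fin d))
    (XStp : Matrix (Fin n) S ℝ)
    (g1 : XSᵀ * XStp * XSᵀ = XSᵀ) (g2 : XStp * XSᵀ * XStp = XStp)
    (g3 : (XSᵀ * XStp)ᵀ = XSᵀ * XStp) (g4 : (XStp * XSᵀ)ᵀ = XStp * XSᵀ)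
    (p : Fin n → ℝ) (hp : p = XStp.mulVec fun j : S => w (j : Fin d))
    (hcond : ∀ j ∈ S, ∀ ℓ, ℓ ∉ S →
      α * (⨆ i, |w i|) < |Xᵀ.mulVec p j| - |Xᵀ.mulVec p ℓ|) :
    (∀ i ∈ S, ∀ ℓ, ℓ ∉ S →
      |Xᵀ.mulVec p ℓ - α * w ℓ| < |Xᵀ.mulVec p i - α * w i|) ∧
    htSet S.card (fun i => Xᵀ.mulVec p i - α * w i) =
      {fun i => if i ∈ S then Xᵀ.mulVec p i - α * w i else 0} :=
  support_separation_general X S w α hα hsupp p hcond
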